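/- Let (T, μ, θ) be a faithfully flat quantum torsor, Z = (B ⊗ T)^{co B}, and S_Z : Z → T defined by S_Z(Σ x_i ⊗ y_i ⊗ z_i) = Σ x_i y_i z_i. Then S_Z : Z → T^op is an algebra morphism: S_Z(uv) = S_Z(v)S_Z(u) for u, v ∈ Z. -/

import Mathlib

open TensorProduct

namespace Torsor

variable (k : Type*) [CommRing k] (T : Type*) [Ring T] [Algebra k T]

/-- Rearrangement `a ⊗ (b ⊗ c) ↦ b ⊗ (a ⊗ c)` for right-nested triple tensor products. -/
noncomputable def sw (M N P : Type*) [AddCommGroup M] [AddCommGroup N] [AddCommGroup P]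
    [Module k M] [Module k N] [Module k P] :
    M ⊗[k] (N ⊗[k] P) ≃ₗ[k] N ⊗[k] (M ⊗[k] P) :=
  (TensorProduct.assoc k M N P).symm ≪≫ₗ
    (TensorProduct.congr (TensorProduct.comm k M N) (LinearEquiv.refl k P)) ≪≫ₗ
    TensorProduct.assoc k N M P

/-- The linear identification `T ⊗ T ⊗ T ≅ T ⊗ T^op ⊗ T`. -/
noncomputable def e3 : T ⊗[k] (T ⊗[k] T) ≃ₗ[k] T ⊗[k] (Tᵐᵒᵖ ⊗[k] T) :=
  TensorProduct.congr (LinearEquiv.refl k T)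
    (TensorProduct.congr (MulOpposite.opLinearEquiv k) (LinearEquiv.refl k T))

/-- The multiplication of the algebra `T ⊗ T^op ⊗ T`, transported to `T ⊗ T ⊗ T`. -/
noncomputable def mulMidOp (u v : T ⊗[k] (T ⊗[k] T)) : T ⊗[k] (T ⊗[k] T) :=
  (e3 k T).symm ((e3 k T) u * (e3 k T) v)

/-- Reversal `a ⊗ b ⊗ c ↦ c ⊗ b ⊗ a` of a triple tensor product. -/
noncomputable def rev3 : T ⊗[k] (T ⊗[k] T) →ₗ[k] T ⊗[k] (T ⊗[k] T) :=
  (TensorProduct.map LinearMap.id (TensorProduct.comm k T T).toLinearMap) ∘ₗ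
    (TensorProduct.comm k (T ⊗[k] T) T).toLinearMap ∘ₗ
    (TensorProduct.assoc k T T T).symm.toLinearMap

/-- Expansion of the first leg of `T ⊗ (T ⊗ T)` by a map `ν : T → T ⊗ T ⊗ T`. -/
noncomputable def expandFirst (ν : T →ₗ[k] T ⊗[k] (T ⊗[k] T)) :
    T ⊗[k] (T ⊗[k] T) →ₗ[k] T ⊗[k] (T ⊗[k] (T ⊗[k] (T ⊗[k] T))) :=
  (TensorProduct.map LinearMap.id (TensorProduct.assoc k T T (T ⊗[k] T)).toLinearMap) ∘ₗ
    (TensorProduct.assoc k T (T ⊗[k] T) (T ⊗[k] T)).toLinearMap ∘ₗ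
    (TensorProduct.map ν LinearMap.id)

/-- Expansion of the last leg of `T ⊗ (T ⊗ T)` by a map `ν : T → T ⊗ T ⊗ T`. -/
noncomputable def expandLast (ν : T →ₗ[k] T ⊗[k] (T ⊗[k] T)) :
    T ⊗[k] (T ⊗[k] T) →ₗ[k] T ⊗[k] (T ⊗[k] (T ⊗[k] (T ⊗[k] T))) :=
  TensorProduct.map LinearMap.id (TensorProduct.map LinearMap.id ν)

/-- Expansion of the first leg of `T ⊗ T` by a map `ν : T → T ⊗ T ⊗ T`. -/
noncomputable def inner (ν : T →ₗ[k] T ⊗[k] (T ⊗[k] T)) :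
    T ⊗[k] T →ₗ[k] T ⊗[k] (T ⊗[k] (T ⊗[k] T)) :=
  (TensorProduct.map LinearMap.id (TensorProduct.assoc k T T T).toLinearMap) ∘ₗ
    (TensorProduct.assoc k T (T ⊗[k] T) T).toLinearMap ∘ₗ
    (TensorProduct.map ν LinearMap.id)

/-- Expansion of the middle leg of `T ⊗ (T ⊗ T)` by a map `ν : T → T ⊗ T ⊗ T`. -/
noncomputable def expandMid (ν : T →ₗ[k] T ⊗[k] (T ⊗[k] T)) :
    T ⊗[k] (T ⊗[k] T) →ₗ[k] T ⊗[k] (T ⊗[k] (T ⊗[k] (T ⊗[k] T))) :=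
  TensorProduct.map LinearMap.id (inner k T ν)

/-- A quantum torsor structure on the `k`-algebra `T`: an algebra morphism
`μ : T → T ⊗ T^op ⊗ T` (encoded as a linear map to `T ⊗ T ⊗ T` which is unital and
multiplicative for the `T ⊗ T^op ⊗ T` product) satisfying the counit laws
`(m ⊗ T)∘μ(x) = 1 ⊗ x`, `(T ⊗ m)∘μ(x) = x ⊗ 1` and coassociativity, together with an
algebra endomorphism `θ` satisfying Grunspan's torsor-endomorphism law
`x^(1) ⊗ x^(2) ⊗ θ(x^(3)) ⊗ x^(4) ⊗ x^(5) = x^(1) ⊗ x^(2)^(3) ⊗ x^(2)^(2) ⊗ x^(2)^(1) ⊗ x^(3)`. -/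
structure _root_.QuantumTorsor where
  μ : T →ₗ[k] T ⊗[k] (T ⊗[k] T)
  θ : T →ₐ[k] T
  μ_one : μ 1 = 1 ⊗ₜ[k] (1 ⊗ₜ[k] 1)
  μ_mul : ∀ x y : T, μ (x * y) = mulMidOp k T (μ x) (μ y)
  counit_left : (TensorProduct.map (LinearMap.mul' k T) LinearMap.id) ∘ₗ
      (TensorProduct.assoc k T T T).symm.toLinearMap ∘ₗ μ = (TensorProduct.mk k T T) 1
  counit_right : (TensorProduct.map LinearMap.id (LinearMap.mul' k T)) ∘ₗ μ
      = (TensorProduct.mk k T T).flip 1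
  coassoc : (expandLast k T μ) ∘ₗ μ = (expandFirst k T μ) ∘ₗ μ
  theta_law :
    (TensorProduct.map LinearMap.id
        (TensorProduct.map LinearMap.id (TensorProduct.map θ.toLinearMap LinearMap.id))) ∘ₗ
      (expandLast k T μ) ∘ₗ μ
    = (expandMid k T ((rev3 k T) ∘ₗ μ)) ∘ₗ μ

variable {k T}

/-- The defining submodule of the Hopf algebra `A = H_l(T) ⊆ T ⊗ T^op`:
elements with `Σ x^(1) ⊗ x^(2) ⊗ θ(x^(3)) ⊗ y = Σ x ⊗ y^(3) ⊗ y^(2) ⊗ y^(1)`. -/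
noncomputable def subA (qt : QuantumTorsor k T) : Submodule k (T ⊗[k] T) :=
  LinearMap.eqLocus
    (((TensorProduct.map LinearMap.id
        (TensorProduct.map LinearMap.id (TensorProduct.map qt.θ.toLinearMap LinearMap.id))) ∘ₗ
      (inner k T qt.μ)))
    (TensorProduct.map LinearMap.id ((rev3 k T) ∘ₗ qt.μ))

/-- The defining submodule of the Hopf algebra `B = H_r(T) ⊆ T^op ⊗ T`:
elements with `Σ x ⊗ θ(y^(1)) ⊗ y^(2) ⊗ y^(3) = Σ x^(3) ⊗ x^(2) ⊗ x^(1) ⊗ y`. -/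
noncomputable def subB (qt : QuantumTorsor k T) : Submodule k (T ⊗[k] T) :=
  LinearMap.eqLocus
    (TensorProduct.map LinearMap.id
        ((TensorProduct.map qt.θ.toLinearMap LinearMap.id) ∘ₗ qt.μ))
    (inner k T ((rev3 k T) ∘ₗ qt.μ))

/-- The image of `B ⊗ T` inside `T ⊗ T ⊗ T`. -/
noncomputable def subBT (qt : QuantumTorsor k T) : Submodule k (T ⊗[k] (T ⊗[k] T)) :=
  Submodule.map (TensorProduct.assoc k T T T).toLinearMap
    (LinearMap.range (TensorProduct.map (subB qt).subtype (LinearMap.id (R := k) (M := T))))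

/-- The image of `T ⊗ A` inside `T ⊗ T ⊗ T`. -/
noncomputable def subTA (qt : QuantumTorsor k T) : Submodule k (T ⊗[k] (T ⊗[k] T)) :=
  LinearMap.range (TensorProduct.map (LinearMap.id (R := k) (M := T)) (subA qt).subtype)

/-- The left-hand side of the right `B`-coinvariance condition on `B ⊗ T`:
`x ⊗ y ⊗ z ↦ x ⊗ y ⊗ z^(1) ⊗ z^(2) ⊗ z^(3)`. -/
noncomputable def eq1L (qt : QuantumTorsor k T) :
    T ⊗[k] (T ⊗[k] T) →ₗ[k] T ⊗[k] (T ⊗[k] (T ⊗[k] (T ⊗[k] T))) :=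
  TensorProduct.map LinearMap.id (TensorProduct.map LinearMap.id qt.μ)

/-- The right-hand side of the right `B`-coinvariance condition on `B ⊗ T`:
`x ⊗ y ⊗ z ↦ x ⊗ y^(1) ⊗ z ⊗ θ(y^(3)) ⊗ y^(2)`. -/
noncomputable def eq1R (qt : QuantumTorsor k T) :
    T ⊗[k] (T ⊗[k] T) →ₗ[k] T ⊗[k] (T ⊗[k] (T ⊗[k] (T ⊗[k] T))) :=
  (TensorProduct.map LinearMap.id
      ((TensorProduct.map LinearMap.id
          ((TensorProduct.map LinearMap.id (TensorProduct.comm k T T).toLinearMap) ∘ₗ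
            (TensorProduct.comm k (T ⊗[k] T) T).toLinearMap)) ∘ₗ
        (TensorProduct.assoc k T (T ⊗[k] T) T).toLinearMap)) ∘ₗ
    (TensorProduct.map LinearMap.id
      (TensorProduct.map
        (TensorProduct.map LinearMap.id (TensorProduct.map LinearMap.id qt.θ.toLinearMap))
        LinearMap.id)) ∘ₗ
    (TensorProduct.map LinearMap.id (TensorProduct.map qt.μ LinearMap.id))

/-- The left-hand side of the left `A`-coinvariance condition on `T ⊗ A`:
`x ⊗ y ⊗ z ↦ x^(1) ⊗ x^(2) ⊗ x^(3) ⊗ y ⊗ z`. -/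
noncomputable def eq2L (qt : QuantumTorsor k T) :
    T ⊗[k] (T ⊗[k] T) →ₗ[k] T ⊗[k] (T ⊗[k] (T ⊗[k] (T ⊗[k] T))) :=
  expandFirst k T qt.μ

/-- The right-hand side of the left `A`-coinvariance condition on `T ⊗ A`:
`x ⊗ y ⊗ z ↦ y^(2) ⊗ θ(y^(1)) ⊗ x ⊗ y^(3) ⊗ z`. -/
noncomputable def eq2R (qt : QuantumTorsor k T) :
    T ⊗[k] (T ⊗[k] T) →ₗ[k] T ⊗[k] (T ⊗[k] (T ⊗[k] (T ⊗[k] T))) :=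
  (TensorProduct.map LinearMap.id
      (TensorProduct.map LinearMap.id (sw k T T T).toLinearMap)) ∘ₗ
    (sw k T T (T ⊗[k] (T ⊗[k] T))).toLinearMap ∘ₗ
    (TensorProduct.map LinearMap.id (TensorProduct.assoc k T T (T ⊗[k] T)).toLinearMap) ∘ₗ
    (TensorProduct.assoc k T (T ⊗[k] T) (T ⊗[k] T)).toLinearMap ∘ₗ
    (TensorProduct.map (TensorProduct.map qt.θ.toLinearMap LinearMap.id) LinearMap.id) ∘ₗ
    (TensorProduct.map qt.μ LinearMap.id) ∘ₗ
    (sw k T T T).toLinearMap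

/-- The coinvariants `(B ⊗ T)^{co B}`, as a submodule of `T ⊗ T ⊗ T`. -/
noncomputable def coinvB (qt : QuantumTorsor k T) : Submodule k (T ⊗[k] (T ⊗[k] T)) :=
  subBT qt ⊓ LinearMap.eqLocus (eq1L qt) (eq1R qt)

/-- The coinvariants `(T ⊗ A)^{co A}`, as a submodule of `T ⊗ T ⊗ T`. -/
noncomputable def coinvA (qt : QuantumTorsor k T) : Submodule k (T ⊗[k] (T ⊗[k] T)) :=
  subTA qt ⊓ LinearMap.eqLocus (eq2L qt) (eq2R qt)

end Torsor

namespace Torsor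

variable {k : Type*} [CommRing k] {T : Type*} [Ring T] [Algebra k T]

/-- The linear identification `T ⊗ T ⊗ T ≅ T^op ⊗ T ⊗ T^op`. -/
noncomputable def eZ (k : Type*) [CommRing k] (T : Type*) [Ring T] [Algebra k T] :
    T ⊗[k] (T ⊗[k] T) ≃ₗ[k] Tᵐᵒᵖ ⊗[k] (T ⊗[k] Tᵐᵒᵖ) :=
  TensorProduct.congr (MulOpposite.opLinearEquiv k)
    (TensorProduct.congr (LinearEquiv.refl k T) (MulOpposite.opLinearEquiv k))

/-- The multiplication of the algebra `T^op ⊗ T ⊗ T^op` (the ambient algebra of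
`Z = (B ⊗ T)^{co B}`), transported to `T ⊗ T ⊗ T`. -/
noncomputable def zMul (u v : T ⊗[k] (T ⊗[k] T)) : T ⊗[k] (T ⊗[k] T) :=
  (eZ k T).symm ((eZ k T) u * (eZ k T) v)

/-- The map `S_Z : Z → T`, `Σ xᵢ ⊗ yᵢ ⊗ zᵢ ↦ Σ xᵢ yᵢ zᵢ`. -/
noncomputable def SZ (k : Type*) [CommRing k] (T : Type*) [Ring T] [Algebra k T] :
    T ⊗[k] (T ⊗[k] T) →ₗ[k] T :=
  (LinearMap.mul' k T) ∘ₗ (TensorProduct.map LinearMap.id (LinearMap.mul' k T))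

end Torsor


namespace SZProof
open Torsor

set_option maxHeartbeats 1600000
set_option synthInstance.maxHeartbeats 400000

variable (k : Type*) [CommRing k] (T : Type*) [Ring T] [Algebra k T]

noncomputable def Φ₁ : T ⊗[k] (T ⊗[k] (T ⊗[k] (T ⊗[k] T))) →ₗ[k] T ⊗[k] (T ⊗[k] (T ⊗[k] T)) :=
  TensorProduct.map (LinearMap.id : T →ₗ[k] T) (TensorProduct.map (LinearMap.id : T →ₗ[k] T)
    (TensorProduct.map (LinearMap.id : T →ₗ[k] T) (LinearMap.mul' k T)))

/-- `p2 ⊗ p3 ↦ p3 * p2` -/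
noncomputable def msw : T ⊗[k] T →ₗ[k] T :=
  LinearMap.mul' k T ∘ₗ (TensorProduct.comm k T T).toLinearMap

noncomputable def Φ₂a : T ⊗[k] (T ⊗[k] T) →ₗ[k] T ⊗[k] T :=
  (TensorProduct.map (msw k T) (LinearMap.id : T →ₗ[k] T)) ∘ₗ
    (TensorProduct.assoc k T T T).symm.toLinearMap

noncomputable def Φ₂ : T ⊗[k] (T ⊗[k] (T ⊗[k] T)) →ₗ[k] (T ⊗[k] T) ⊗[k] T :=
  (TensorProduct.assoc k T T T).symm.toLinearMap ∘ₗ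
    TensorProduct.map (LinearMap.id : T →ₗ[k] T) (Φ₂a k T)

variable {k T} (qt : QuantumTorsor k T)

/-- `y ⊗ z ↦ θ(z) * y` -/
noncomputable def sθ : T ⊗[k] T →ₗ[k] T :=
  msw k T ∘ₗ TensorProduct.map (LinearMap.id : T →ₗ[k] T) qt.θ.toLinearMap

/-- `x ↦ Σ x¹ ⊗ θ(x³) x²` -/
noncomputable def t12 : T →ₗ[k] T ⊗[k] T :=
  (TensorProduct.map (LinearMap.id : T →ₗ[k] T) (sθ qt)) ∘ₗ qt.μ

lemma lhs_eval (u : T ⊗[k] (T ⊗[k] T)) :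
    Φ₂ k T (Φ₁ k T ((TensorProduct.map LinearMap.id
        (TensorProduct.map LinearMap.id (TensorProduct.map qt.θ.toLinearMap LinearMap.id)))
      ((expandLast k T qt.μ) u)))
    = ((TensorProduct.map LinearMap.id (sθ qt)) u) ⊗ₜ[k] (1:T) := by
  induction u using TensorProduct.induction_on with
  | zero => simp
  | add x y hx hy => simp only [map_add, hx, hy, add_tmul]
  | tmul a w =>
    induction w using TensorProduct.induction_on with
    | zero => simp
    | add x y hx hy => simp only [tmul_add, map_add, hx, hy, add_tmul]
    | tmul b c =>
      have hw : ∀ w : T ⊗[k] (T ⊗[k] T),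
          Φ₂ k T (Φ₁ k T (a ⊗ₜ[k] (b ⊗ₜ[k]
            ((TensorProduct.map qt.θ.toLinearMap LinearMap.id) w))))
          = Φ₂ k T (a ⊗ₜ[k] (b ⊗ₜ[k]
            ((TensorProduct.map qt.θ.toLinearMap (LinearMap.mul' k T)) w))) := by
        intro w
        induction w using TensorProduct.induction_on with
        | zero => simp
        | add x y hx hy => simp only [tmul_add, map_add, hx, hy]
        | tmul p qr =>
          simp [Φ₁, Φ₂, Φ₂a]
      have h1 : (expandLast k T qt.μ) (a ⊗ₜ[k] (b ⊗ₜ[k] c)) = a ⊗ₜ[k] (b ⊗ₜ[k] qt.μ c) := by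
        simp [expandLast]
      rw [h1]
      have h2 : (TensorProduct.map LinearMap.id
          (TensorProduct.map LinearMap.id (TensorProduct.map qt.θ.toLinearMap LinearMap.id)))
          (a ⊗ₜ[k] (b ⊗ₜ[k] qt.μ c))
          = a ⊗ₜ[k] (b ⊗ₜ[k] ((TensorProduct.map qt.θ.toLinearMap LinearMap.id) (qt.μ c))) := by
        simp
      rw [h2, hw]
      have hcomp : (TensorProduct.map qt.θ.toLinearMap (LinearMap.mul' k T) :
            T ⊗[k] (T ⊗[k] T) →ₗ[k] T ⊗[k] T)
          = (TensorProduct.map qt.θ.toLinearMap LinearMap.id) ∘ₗ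
              (TensorProduct.map LinearMap.id (LinearMap.mul' k T)) := by
        rw [← TensorProduct.map_comp]
        simp
      have h3 : (TensorProduct.map qt.θ.toLinearMap (LinearMap.mul' k T)) (qt.μ c)
          = (TensorProduct.map qt.θ.toLinearMap LinearMap.id)
              ((TensorProduct.map LinearMap.id (LinearMap.mul' k T)) (qt.μ c)) := by
        rw [hcomp]; rfl
      have h4 : (TensorProduct.map LinearMap.id (LinearMap.mul' k T)) (qt.μ c)
          = c ⊗ₜ[k] (1:T) := by
        have := LinearMap.congr_fun qt.counit_right c
        simpa using this
      rw [h3, h4]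
      simp [Φ₂, Φ₂a, msw, sθ]

lemma rhs_eval (u : T ⊗[k] (T ⊗[k] T)) :
    Φ₂ k T (Φ₁ k T ((expandMid k T ((rev3 k T) ∘ₗ qt.μ)) u))
    = (TensorProduct.map ((TensorProduct.mk k T T).flip 1) LinearMap.id)
        ((TensorProduct.map LinearMap.id (LinearMap.mul' k T)) u) := by
  induction u using TensorProduct.induction_on with
  | zero => simp
  | add x y hx hy => simp only [map_add, hx, hy]
  | tmul a w =>
    induction w using TensorProduct.induction_on with
    | zero => simp
    | add x y hx hy => simp only [tmul_add, map_add, hx, hy]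
    | tmul y z =>
      have h1 : (expandMid k T ((rev3 k T) ∘ₗ qt.μ)) (a ⊗ₜ[k] (y ⊗ₜ[k] z))
          = a ⊗ₜ[k] ((Torsor.inner k T ((rev3 k T) ∘ₗ qt.μ)) (y ⊗ₜ[k] z)) := by
        simp [expandMid]
      rw [h1]
      have hw : ∀ w : T ⊗[k] (T ⊗[k] T),
          Φ₂ k T (Φ₁ k T (a ⊗ₜ[k]
            ((TensorProduct.map LinearMap.id (TensorProduct.assoc k T T T).toLinearMap)
              ((TensorProduct.assoc k T (T ⊗[k] T) T).toLinearMap ((rev3 k T w) ⊗ₜ[k] z)))))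
          = (TensorProduct.map ((TensorProduct.mk k T T) a) (LinearMap.mulRight k z))
              ((TensorProduct.comm k T T).toLinearMap
                ((TensorProduct.map LinearMap.id (LinearMap.mul' k T)) w)) := by
        intro w
        induction w using TensorProduct.induction_on with
        | zero => simp
        | add x y hx hy => simp only [map_add, add_tmul, tmul_add, hx, hy]
        | tmul p qr =>
          induction qr using TensorProduct.induction_on with
          | zero => simp
          | add x y hx hy => simp only [map_add, tmul_add, add_tmul, hx, hy]
          | tmul q r => simp [Φ₁, Φ₂, Φ₂a, msw, rev3]
      have h2 : (Torsor.inner k T ((rev3 k T) ∘ₗ qt.μ)) (y ⊗ₜ[k] z)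
          = (TensorProduct.map LinearMap.id (TensorProduct.assoc k T T T).toLinearMap)
              ((TensorProduct.assoc k T (T ⊗[k] T) T).toLinearMap ((rev3 k T (qt.μ y)) ⊗ₜ[k] z)) := by
        simp [Torsor.inner]
      rw [h2, hw]
      have h4 : (TensorProduct.map LinearMap.id (LinearMap.mul' k T)) (qt.μ y)
          = y ⊗ₜ[k] (1:T) := by
        have := LinearMap.congr_fun qt.counit_right y
        simpa using this
      rw [h4]
      simp

section withFF
variable [Module.FaithfullyFlat k T]

lemma tmul_one_eq_zero {M : Type*} [AddCommGroup M] [Module k M] {x : M}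
    (h : x ⊗ₜ[k] (1:T) = 0) : x = 0 := by
  have hf : LinearMap.rTensor T (LinearMap.toSpanSingleton k M x) = 0 := by
    apply TensorProduct.ext'
    intro c t
    have hxt : x ⊗ₜ[k] t = 0 := by
      have := congrArg (LinearMap.lTensor M (LinearMap.mulLeft k t)) h
      simpa using this
    have hsm : (c • x) ⊗ₜ[k] t = c • (x ⊗ₜ[k] t) := by rw [smul_tmul']
    simp [LinearMap.rTensor_tmul, LinearMap.toSpanSingleton_apply, hsm, hxt]
  have h0 := (Module.FaithfullyFlat.zero_iff_rTensor_zero k T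
      (LinearMap.toSpanSingleton k M x)).mpr hf
  have := congrArg (fun g : k →ₗ[k] M => g 1) h0
  simpa using this

lemma tmul_one_inj {M : Type*} [AddCommGroup M] [Module k M] {x y : M}
    (h : x ⊗ₜ[k] (1:T) = y ⊗ₜ[k] (1:T)) : x = y := by
  have h0 : (x - y) ⊗ₜ[k] (1:T) = 0 := by rw [sub_tmul, h, sub_self]
  exact sub_eq_zero.mp (tmul_one_eq_zero h0)

lemma t12_eq : t12 qt = (TensorProduct.mk k T T).flip 1 := by
  apply LinearMap.ext; intro x
  apply tmul_one_inj (k := k) (T := T)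
  have hlaw := LinearMap.congr_fun qt.theta_law x
  simp only [LinearMap.comp_apply] at hlaw
  have := congrArg (fun w => Φ₂ k T (Φ₁ k T w)) hlaw
  rw [lhs_eval qt (qt.μ x), rhs_eval qt (qt.μ x)] at this
  have h4 : (TensorProduct.map LinearMap.id (LinearMap.mul' k T)) (qt.μ x) = x ⊗ₜ[k] (1:T) := by
    have := LinearMap.congr_fun qt.counit_right x
    simpa using this
  rw [h4] at this
  simp only [t12, LinearMap.comp_apply]
  rw [this]
  simp

lemma mem_span_one {y : T} (h : (1:T) ⊗ₜ[k] y = y ⊗ₜ[k] (1:T)) :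
    y ∈ Submodule.span k {(1:T)} := by
  set K := Submodule.span k {(1:T)}
  have h2 := congrArg (LinearMap.rTensor T K.mkQ) h
  have hq1 : K.mkQ (1:T) = 0 := by
    rw [Submodule.mkQ_apply, Submodule.Quotient.mk_eq_zero]
    exact Submodule.mem_span_singleton_self _
  simp only [LinearMap.rTensor_tmul, hq1, TensorProduct.zero_tmul] at h2
  have h3 : K.mkQ y = 0 := tmul_one_eq_zero h2.symm
  rwa [Submodule.mkQ_apply, Submodule.Quotient.mk_eq_zero] at h3

end withFF

/-- left multiplication by `e3 (μ y)` in the midop algebra, as a bilinear map. -/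
noncomputable def Cl : T →ₗ[k] T ⊗[k] (T ⊗[k] T) →ₗ[k] T ⊗[k] (T ⊗[k] T) :=
  (((LinearMap.mul k (T ⊗[k] (Tᵐᵒᵖ ⊗[k] T)) ∘ₗ (e3 k T).toLinearMap ∘ₗ qt.μ).compl₂
      (e3 k T).toLinearMap).compr₂ (e3 k T).symm.toLinearMap)

lemma Cl_apply (y : T) (w : T ⊗[k] (T ⊗[k] T)) :
    Cl qt y w = mulMidOp k T (qt.μ y) w := rfl

lemma mulMidOp_eq (P C : T ⊗[k] (T ⊗[k] T)) :
    mulMidOp k T P C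
      = (e3 k T).symm ((LinearMap.mul k (T ⊗[k] (Tᵐᵒᵖ ⊗[k] T)) ((e3 k T) P)) ((e3 k T) C)) := rfl

lemma mulMidOp_zero_left (C : T ⊗[k] (T ⊗[k] T)) : mulMidOp k T 0 C = 0 := by
  rw [mulMidOp_eq, map_zero]
  simp

lemma mulMidOp_add_left (x y C : T ⊗[k] (T ⊗[k] T)) :
    mulMidOp k T (x + y) C = mulMidOp k T x C + mulMidOp k T y C := by
  simp only [mulMidOp_eq, map_add, LinearMap.add_apply]

lemma mulMidOp_tmul (p₁ p₂ p₃ q₁ q₂ q₃ : T) :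
    mulMidOp k T (p₁ ⊗ₜ[k] (p₂ ⊗ₜ[k] p₃)) (q₁ ⊗ₜ[k] (q₂ ⊗ₜ[k] q₃))
    = (p₁*q₁) ⊗ₜ[k] ((q₂*p₂) ⊗ₜ[k] (p₃*q₃)) := by
  simp [mulMidOp, e3, Algebra.TensorProduct.tmul_mul_tmul, ← MulOpposite.op_mul]

variable (k T)

/-- `p₃ ⊗ (q₄ ⊗ q₅) ↦ (p₃ q₄) ⊗ θ(q₅)` -/
noncomputable def s₁ (θ' : T →ₗ[k] T) : T ⊗[k] (T ⊗[k] T) →ₗ[k] T ⊗[k] T :=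
  (TensorProduct.map (LinearMap.mul' k T) θ') ∘ₗ (TensorProduct.assoc k T T T).symm.toLinearMap

/-- `p₂ ⊗ (s ⊗ t) ↦ (t p₂) ⊗ s` -/
noncomputable def s₂ : T ⊗[k] (T ⊗[k] T) →ₗ[k] T ⊗[k] T :=
  (TensorProduct.map (msw k T) (LinearMap.id : T →ₗ[k] T)) ∘ₗ
    (TensorProduct.assoc k T T T).symm.toLinearMap ∘ₗ
    (TensorProduct.map (LinearMap.id : T →ₗ[k] T) (TensorProduct.comm k T T).toLinearMap)

variable {k T}

/-- `p₁⊗(p₂⊗(p₃⊗(q₄⊗q₅))) ↦ (p₁ z) ⊗ ((θ(q₅) p₂) ⊗ (p₃ q₄))` -/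
noncomputable def Fz (z : T) : T ⊗[k] (T ⊗[k] (T ⊗[k] (T ⊗[k] T))) →ₗ[k] T ⊗[k] (T ⊗[k] T) :=
  (TensorProduct.map (LinearMap.mulRight k z) (LinearMap.id : T ⊗[k] T →ₗ[k] T ⊗[k] T)) ∘ₗ
    TensorProduct.map (LinearMap.id : T →ₗ[k] T)
      ((s₂ k T) ∘ₗ TensorProduct.map (LinearMap.id : T →ₗ[k] T) (s₁ k T qt.θ.toLinearMap))

/-- The inner part of `eq1R` after the `μ`-expansion. -/
noncomputable def Pre : (T ⊗[k] (T ⊗[k] T)) ⊗[k] T →ₗ[k] T ⊗[k] (T ⊗[k] (T ⊗[k] T)) :=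
  ((TensorProduct.map LinearMap.id
          ((TensorProduct.map LinearMap.id (TensorProduct.comm k T T).toLinearMap) ∘ₗ
            (TensorProduct.comm k (T ⊗[k] T) T).toLinearMap)) ∘ₗ
        (TensorProduct.assoc k T (T ⊗[k] T) T).toLinearMap) ∘ₗ
    (TensorProduct.map
        (TensorProduct.map LinearMap.id (TensorProduct.map LinearMap.id qt.θ.toLinearMap))
        LinearMap.id)

lemma eq1R_tmul (a : T) (w : T ⊗[k] T) :
    eq1R qt (a ⊗ₜ[k] w)
      = a ⊗ₜ[k] (Pre qt ((TensorProduct.map qt.μ LinearMap.id) w)) := by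
  simp [eq1R, Pre]

lemma h_i (w : T ⊗[k] (T ⊗[k] T)) (z : T) :
    TensorProduct.lift (Cl qt) (Pre qt (w ⊗ₜ[k] z))
      = Fz qt z ((expandFirst k T qt.μ) w) := by
  induction w using TensorProduct.induction_on with
  | zero => simp
  | add x y hx hy => simp only [map_add, add_tmul, hx, hy]
  | tmul b₁ w₂ =>
    induction w₂ using TensorProduct.induction_on with
    | zero => simp
    | add x y hx hy => simp only [map_add, add_tmul, tmul_add, hx, hy]
    | tmul b₂ b₃ =>
      have hPre : Pre qt ((b₁ ⊗ₜ[k] (b₂ ⊗ₜ[k] b₃)) ⊗ₜ[k] z)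
          = b₁ ⊗ₜ[k] (z ⊗ₜ[k] (qt.θ b₃ ⊗ₜ[k] b₂)) := by
        simp [Pre]
      rw [hPre]
      have hEF : (expandFirst k T qt.μ) (b₁ ⊗ₜ[k] (b₂ ⊗ₜ[k] b₃))
          = (TensorProduct.map LinearMap.id (TensorProduct.assoc k T T (T ⊗[k] T)).toLinearMap)
              ((TensorProduct.assoc k T (T ⊗[k] T) (T ⊗[k] T)).toLinearMap
                ((qt.μ b₁) ⊗ₜ[k] (b₂ ⊗ₜ[k] b₃))) := by
        simp [expandFirst]
      rw [hEF]
      have := TensorProduct.lift.tmul (f' := Cl qt) b₁ (z ⊗ₜ[k] (qt.θ b₃ ⊗ₜ[k] b₂))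
      rw [this, Cl_apply]
      generalize qt.μ b₁ = P
      induction P using TensorProduct.induction_on with
      | zero => simp [mulMidOp_zero_left]
      | add x y hx hy =>
        simp only [mulMidOp_add_left, add_tmul, map_add, hx, hy]
      | tmul p₁ w₃ =>
        induction w₃ using TensorProduct.induction_on with
        | zero => simp [mulMidOp_zero_left, tmul_zero]
        | add x y hx hy =>
          simp only [tmul_add, mulMidOp_add_left, add_tmul, map_add, hx, hy]
        | tmul p₂ p₃ =>
          rw [mulMidOp_tmul]
          simp [Fz, s₁, s₂, msw]

lemma map_id_comp {M N P : Type*} [AddCommGroup M] [AddCommGroup N] [AddCommGroup P]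
    [Module k M] [Module k N] [Module k P] (f : N →ₗ[k] P) (g : M →ₗ[k] N) :
    (TensorProduct.map (LinearMap.id : T →ₗ[k] T) (f ∘ₗ g))
      = (TensorProduct.map LinearMap.id f) ∘ₗ (TensorProduct.map LinearMap.id g) := by
  rw [← TensorProduct.map_comp]; simp

lemma h_iii (z : T) (u : T ⊗[k] (T ⊗[k] T)) :
    Fz qt z ((expandLast k T qt.μ) u)
      = (TensorProduct.map (LinearMap.mulRight k z) ((TensorProduct.mk k T T).flip 1))
          ((TensorProduct.map LinearMap.id (sθ qt)) u) := by
  induction u using TensorProduct.induction_on with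
  | zero => simp
  | add x y hx hy => simp only [map_add, hx, hy]
  | tmul q₁ w =>
    induction w using TensorProduct.induction_on with
    | zero => simp
    | add x y hx hy => simp only [tmul_add, map_add, hx, hy]
    | tmul q₂ c₃ =>
      have h1 : (expandLast k T qt.μ) (q₁ ⊗ₜ[k] (q₂ ⊗ₜ[k] c₃)) = q₁ ⊗ₜ[k] (q₂ ⊗ₜ[k] qt.μ c₃) := by
        simp [expandLast]
      rw [h1]
      have hs₁ : s₁ k T qt.θ.toLinearMap (qt.μ c₃) = (1:T) ⊗ₜ[k] qt.θ c₃ := by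
        have hcomp : (TensorProduct.map (LinearMap.mul' k T) qt.θ.toLinearMap :
              (T ⊗[k] T) ⊗[k] T →ₗ[k] T ⊗[k] T)
            = (TensorProduct.map LinearMap.id qt.θ.toLinearMap) ∘ₗ
                (TensorProduct.map (LinearMap.mul' k T) LinearMap.id) := by
          rw [← TensorProduct.map_comp]; simp
        have hcl := LinearMap.congr_fun qt.counit_left c₃
        simp only [LinearMap.comp_apply, LinearEquiv.coe_coe] at hcl
        simp only [s₁, LinearMap.comp_apply, LinearEquiv.coe_coe, hcomp, hcl]
        simp
      simp only [Fz, LinearMap.comp_apply, TensorProduct.map_tmul, LinearMap.id_coe, id_eq]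
      rw [hs₁]
      simp [s₂, msw, sθ]

section withFF2
variable [Module.FaithfullyFlat k T]

lemma claimE (w : T ⊗[k] (T ⊗[k] T)) :
    (TensorProduct.map LinearMap.id (TensorProduct.lift (Cl qt))) (eq1R qt w)
      = (TensorProduct.map LinearMap.id
          (((TensorProduct.mk k T (T ⊗[k] T)).flip ((1:T) ⊗ₜ[k] (1:T))) ∘ₗ LinearMap.mul' k T)) w := by
  induction w using TensorProduct.induction_on with
  | zero => simp
  | add x y hx hy => simp only [map_add, hx, hy]
  | tmul a w₂ =>
    rw [eq1R_tmul]
    have hinner : ∀ w₂ : T ⊗[k] T,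
        TensorProduct.lift (Cl qt) (Pre qt ((TensorProduct.map qt.μ LinearMap.id) w₂))
          = (((TensorProduct.mk k T (T ⊗[k] T)).flip ((1:T) ⊗ₜ[k] (1:T))) ∘ₗ
              LinearMap.mul' k T) w₂ := by
      intro w₂
      induction w₂ using TensorProduct.induction_on with
      | zero => simp
      | add x y hx hy => simp only [map_add, hx, hy]
      | tmul y z =>
        have h0 : (TensorProduct.map qt.μ LinearMap.id) (y ⊗ₜ[k] z) = (qt.μ y) ⊗ₜ[k] z := by simp
        rw [h0, h_i qt (qt.μ y) z]
        have hco := LinearMap.congr_fun qt.coassoc y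
        simp only [LinearMap.comp_apply] at hco
        rw [← hco, h_iii qt z (qt.μ y)]
        have ht : (TensorProduct.map LinearMap.id (sθ qt)) (qt.μ y) = t12 qt y := rfl
        rw [ht, t12_eq qt]
        simp
    simp only [TensorProduct.map_tmul, LinearMap.id_coe, id_eq, hinner w₂]

lemma Qlemma (v : T ⊗[k] (T ⊗[k] T)) (hv : eq1L qt v = eq1R qt v) :
    (TensorProduct.map LinearMap.id (LinearMap.mul' k T)) v = (SZ k T v) ⊗ₜ[k] (1:T) := by
  set Q := (TensorProduct.map LinearMap.id (LinearMap.mul' k T)) v with hQdef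
  have h1 : ∀ w : T ⊗[k] (T ⊗[k] T),
      (TensorProduct.map LinearMap.id qt.μ)
        ((TensorProduct.map LinearMap.id (LinearMap.mul' k T)) w)
      = (TensorProduct.map LinearMap.id (TensorProduct.lift (Cl qt))) (eq1L qt w) := by
    intro w
    induction w using TensorProduct.induction_on with
    | zero => simp
    | add x y hx hy => simp only [map_add, hx, hy]
    | tmul a w₂ =>
      induction w₂ using TensorProduct.induction_on with
      | zero => simp
      | add x y hx hy => simp only [tmul_add, map_add, hx, hy]
      | tmul y z =>
        have : eq1L qt (a ⊗ₜ[k] (y ⊗ₜ[k] z)) = a ⊗ₜ[k] (y ⊗ₜ[k] qt.μ z) := by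
          simp [eq1L]
        rw [this]
        simp [Cl_apply, qt.μ_mul y z]
  have hdag : (TensorProduct.map LinearMap.id qt.μ) Q
      = (TensorProduct.map LinearMap.id
          ((TensorProduct.mk k T (T ⊗[k] T)).flip ((1:T) ⊗ₜ[k] (1:T)))) Q := by
    rw [hQdef, h1 v, hv, claimE qt v]
    rw [map_id_comp]
    rfl
  -- (‡)
  set g₃ : T ⊗[k] (T ⊗[k] T) →ₗ[k] T ⊗[k] T :=
    (TensorProduct.map (LinearMap.mul' k T) LinearMap.id) ∘ₗ
      (TensorProduct.assoc k T T T).symm.toLinearMap with hg₃def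
  have hg₃μ : g₃ ∘ₗ qt.μ = TensorProduct.mk k T T 1 := by
    rw [hg₃def, LinearMap.comp_assoc]
    exact qt.counit_left
  have hg₃r : g₃ ∘ₗ ((TensorProduct.mk k T (T ⊗[k] T)).flip ((1:T) ⊗ₜ[k] (1:T)))
      = (TensorProduct.mk k T T).flip 1 := by
    apply LinearMap.ext; intro x
    simp [hg₃def]
  have hddag : (TensorProduct.map LinearMap.id (TensorProduct.mk k T T 1)) Q
      = (TensorProduct.map LinearMap.id ((TensorProduct.mk k T T).flip 1)) Q := by
    have c1 : (TensorProduct.map (LinearMap.id : T →ₗ[k] T) g₃) ∘ₗ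
          (TensorProduct.map LinearMap.id qt.μ)
        = TensorProduct.map LinearMap.id (TensorProduct.mk k T T 1) := by
      rw [← TensorProduct.map_comp, hg₃μ, LinearMap.id_comp]
    have c2 : (TensorProduct.map (LinearMap.id : T →ₗ[k] T) g₃) ∘ₗ
          (TensorProduct.map LinearMap.id
            ((TensorProduct.mk k T (T ⊗[k] T)).flip ((1:T) ⊗ₜ[k] (1:T))))
        = TensorProduct.map LinearMap.id ((TensorProduct.mk k T T).flip 1) := by
      rw [← TensorProduct.map_comp, hg₃r, LinearMap.id_comp]
    calc (TensorProduct.map LinearMap.id (TensorProduct.mk k T T 1)) Q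
        = ((TensorProduct.map (LinearMap.id : T →ₗ[k] T) g₃) ∘ₗ
            (TensorProduct.map LinearMap.id qt.μ)) Q := by rw [c1]
      _ = (TensorProduct.map (LinearMap.id : T →ₗ[k] T) g₃)
            ((TensorProduct.map LinearMap.id qt.μ) Q) := rfl
      _ = (TensorProduct.map (LinearMap.id : T →ₗ[k] T) g₃)
            ((TensorProduct.map LinearMap.id
              ((TensorProduct.mk k T (T ⊗[k] T)).flip ((1:T) ⊗ₜ[k] (1:T)))) Q) := by rw [hdag]
      _ = (TensorProduct.map LinearMap.id ((TensorProduct.mk k T T).flip 1)) Q := by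
            rw [← LinearMap.comp_apply, c2]
  -- kernel of f
  set f : T →ₗ[k] T ⊗[k] T := TensorProduct.mk k T T 1 - (TensorProduct.mk k T T).flip 1
    with hfdef
  have hker : LinearMap.ker f = Submodule.span k {(1:T)} := by
    ext y
    simp only [LinearMap.mem_ker, hfdef, LinearMap.sub_apply, sub_eq_zero]
    constructor
    · intro h
      exact mem_span_one (by simpa using h)
    · intro hy
      obtain ⟨c, hc⟩ := Submodule.mem_span_singleton.mp hy
      subst hc
      simp
  have hexact : Function.Exact (Submodule.span k {(1:T)}).subtype f := by
    rw [LinearMap.exact_iff, hker, Submodule.range_subtype]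
  have hTex := Module.Flat.lTensor_exact T hexact
  have hQ0 : (LinearMap.lTensor T f) Q = 0 := by
    have hl : LinearMap.lTensor T f
        = (TensorProduct.map LinearMap.id (TensorProduct.mk k T T 1))
          - (TensorProduct.map LinearMap.id ((TensorProduct.mk k T T).flip 1)) := by
      rw [hfdef, LinearMap.lTensor_sub]
      rfl
    rw [hl, LinearMap.sub_apply, hddag, sub_self]
  obtain ⟨Q₀, hQ₀⟩ := (hTex Q).mp hQ0
  have hrep : ∀ zz : T ⊗[k] (Submodule.span k {(1:T)}), ∃ w : T,
      (LinearMap.lTensor T (Submodule.span k {(1:T)}).subtype) zz = w ⊗ₜ[k] (1:T) := by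
    intro zz
    induction zz using TensorProduct.induction_on with
    | zero => exact ⟨0, by simp⟩
    | add x y hx hy =>
      obtain ⟨w₁, h₁⟩ := hx
      obtain ⟨w₂, h₂⟩ := hy
      exact ⟨w₁ + w₂, by rw [map_add, h₁, h₂, add_tmul]⟩
    | tmul p s =>
      obtain ⟨c, hc⟩ := Submodule.mem_span_singleton.mp s.2
      refine ⟨c • p, ?_⟩
      have hs : (s : T) = c • (1:T) := hc.symm
      rw [LinearMap.lTensor_tmul]
      rw [Submodule.subtype_apply, hs, TensorProduct.tmul_smul, TensorProduct.smul_tmul']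
  obtain ⟨w₀, hw₀⟩ := hrep Q₀
  have hQw : Q = w₀ ⊗ₜ[k] (1:T) := by rw [← hQ₀, hw₀]
  have hSZ : SZ k T v = w₀ := by
    have h5 : SZ k T v = LinearMap.mul' k T Q := rfl
    rw [h5, hQw]
    simp
  rw [hQw, hSZ]

lemma zMul_eqm (u v : T ⊗[k] (T ⊗[k] T)) :
    Torsor.zMul u v = (Torsor.eZ k T).symm
      ((LinearMap.mul k (Tᵐᵒᵖ ⊗[k] (T ⊗[k] Tᵐᵒᵖ)) ((Torsor.eZ k T) u)) ((Torsor.eZ k T) v)) := rfl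

lemma zMul_zero_left (v : T ⊗[k] (T ⊗[k] T)) : Torsor.zMul (0 : T ⊗[k] (T ⊗[k] T)) v = 0 := by
  rw [zMul_eqm, map_zero]
  simp

lemma zMul_add_left (x y v : T ⊗[k] (T ⊗[k] T)) :
    Torsor.zMul (x + y) v = Torsor.zMul x v + Torsor.zMul y v := by
  simp only [zMul_eqm, map_add, LinearMap.add_apply]

lemma zMul_zero_right (u : T ⊗[k] (T ⊗[k] T)) : Torsor.zMul u (0 : T ⊗[k] (T ⊗[k] T)) = 0 := by
  rw [zMul_eqm, map_zero, map_zero]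
  simp

lemma zMul_add_right (u x y : T ⊗[k] (T ⊗[k] T)) :
    Torsor.zMul u (x + y) = Torsor.zMul u x + Torsor.zMul u y := by
  simp only [zMul_eqm, map_add]

lemma zMul_tmul (a b c a' b' c' : T) :
    Torsor.zMul (a ⊗ₜ[k] (b ⊗ₜ[k] c)) (a' ⊗ₜ[k] (b' ⊗ₜ[k] c'))
      = (a' * a) ⊗ₜ[k] ((b * b') ⊗ₜ[k] (c' * c)) := by
  simp [Torsor.zMul, Torsor.eZ, Algebra.TensorProduct.tmul_mul_tmul, ← MulOpposite.op_mul]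

lemma SZ_tmul (a b c : T) : SZ k T (a ⊗ₜ[k] (b ⊗ₜ[k] c)) = a * (b * c) := by
  simp [SZ]

lemma main_mult (v : T ⊗[k] (T ⊗[k] T))
    (hv : eq1L qt v = eq1R qt v) (u : T ⊗[k] (T ⊗[k] T)) :
    SZ k T (Torsor.zMul u v) = SZ k T v * SZ k T u := by
  have hQ := Qlemma qt v hv
  induction u using TensorProduct.induction_on with
  | zero => rw [zMul_zero_left]; simp
  | add x y hx hy => rw [zMul_add_left, map_add, hx, hy, map_add, mul_add]
  | tmul a w =>
    induction w using TensorProduct.induction_on with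
    | zero => rw [TensorProduct.tmul_zero, zMul_zero_left]; simp
    | add x y hx hy =>
      rw [TensorProduct.tmul_add, zMul_add_left, map_add, hx, hy, map_add, mul_add]
    | tmul b c =>
      have hmap : ∀ v' : T ⊗[k] (T ⊗[k] T),
          SZ k T (Torsor.zMul (a ⊗ₜ[k] (b ⊗ₜ[k] c)) v')
            = TensorProduct.lift ((LinearMap.mul k T).compl₂
                ((LinearMap.mulLeft k (a*b)) ∘ₗ (LinearMap.mulRight k c)))
              ((TensorProduct.map LinearMap.id (LinearMap.mul' k T)) v') := by
        intro v'
        induction v' using TensorProduct.induction_on with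
        | zero => rw [zMul_zero_right]; simp
        | add x y hx hy => rw [zMul_add_right, map_add, hx, hy, map_add, map_add]
        | tmul a' w' =>
          induction w' using TensorProduct.induction_on with
          | zero => rw [TensorProduct.tmul_zero, zMul_zero_right]; simp
          | add x y hx hy =>
            simp only [TensorProduct.tmul_add, zMul_add_right, map_add, hx, hy]
          | tmul b' c' =>
            rw [zMul_tmul, SZ_tmul]
            simp [mul_assoc]
      rw [hmap v, hQ, SZ_tmul]
      simp [mul_assoc]

end withFF2

end SZProof

/-- For a faithfully flat quantum torsor, `S_Z : Z → T^op`,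
`Σ xᵢ ⊗ yᵢ ⊗ zᵢ ↦ Σ xᵢ yᵢ zᵢ`, is an algebra morphism: `S_Z(uv) = S_Z(v) S_Z(u)` for
`u, v ∈ Z = (B ⊗ T)^{co B}` (the product of `u` and `v` being taken in the subalgebra `Z`
of `T^op ⊗ T ⊗ T^op`), and `S_Z(1) = 1`. -/
theorem SZ_algebra_morphism_to_Top
    (k : Type*) [CommRing k] (T : Type*) [Ring T] [Algebra k T]
    [Module.FaithfullyFlat k T] (qt : QuantumTorsor k T) :
    (∀ u v : T ⊗[k] (T ⊗[k] T), u ∈ Torsor.coinvB qt → v ∈ Torsor.coinvB qt →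
      Torsor.SZ k T (Torsor.zMul u v) = Torsor.SZ k T v * Torsor.SZ k T u) ∧
      Torsor.SZ k T (1 ⊗ₜ[k] (1 ⊗ₜ[k] 1)) = 1 := by
  constructor
  · intro u v _ hv
    have hv' : Torsor.eq1L qt v = Torsor.eq1R qt v := by
      have h2 := (Submodule.mem_inf.mp hv).2
      rwa [LinearMap.mem_eqLocus] at h2
    exact SZProof.main_mult qt v hv' u
  · simp [Torsor.SZ]
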